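/- Let μ : {compact subintervals of [a,b]} → ℝ be interval-additive and let ρ : [a,b] → ℝ be a function. Then the following are equivalent: (1) ρ is the strict derivative of μ with respect to length on [a,b] (for each x and ε > 0 there is δ > 0 with |μ(I)/|I| - ρ(x)| < ε for all nondegenerate intervals I ⊆ (x-δ,x+δ) ∩ [a,b]); (2) ρ is continuous on [a,b] and μ([c,d]) = ∫_c^d ρ(t) dt for all a ≤ c ≤ d ≤ b. -/

import Mathlib

/-- `μ c d` is the value of the set function on the interval `[c,d]`;
interval-additivity: `μ [c,e] = μ [c,d] + μ [d,e]` for `c ≤ d ≤ e` in `[a,b]`. -/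
def IntervalAdditive (a b : ℝ) (μ : ℝ → ℝ → ℝ) : Prop :=
  ∀ c d e : ℝ, a ≤ c → c ≤ d → d ≤ e → e ≤ b → μ c e = μ c d + μ d e

/-- `g` is the Peano strict derivative of the interval function `μ` with respect
to length on `[a,b]`: for every `x ∈ [a,b]` and `ε > 0` there is `δ > 0` with
`|μ [c,d] / (d - c) - g x| < ε` for every nondegenerate interval
`[c,d] ⊆ (x - δ, x + δ) ∩ [a,b]`. -/
def PeanoStrictDeriv (a b : ℝ) (μ : ℝ → ℝ → ℝ) (g : ℝ → ℝ) : Prop :=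
  ∀ x ∈ Set.Icc a b, ∀ ε > 0, ∃ δ > 0, ∀ c d : ℝ, a ≤ c → c < d → d ≤ b →
    Set.Icc c d ⊆ Set.Ioo (x - δ) (x + δ) → |μ c d / (d - c) - g x| < ε

/-!
Both `μ` and `(c, d) ↦ ∫ t in c..d, ρ t` are additive, and when `ρ` is continuous both have
strict density `ρ`. An additive interval function with strict density `g` has a primitive
`t ↦ μ a t` with derivative `g` on `[a,b]`, so two such functions with the same density agree.
Strictness is also what makes the density continuous: a short interval near both `x` and `y`
has mean value close to both `g x` and `g y`.
-/

open Set

namespace IntervalAdditive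

variable {a b : ℝ} {μ : ℝ → ℝ → ℝ}

lemma apply_self (hμ : IntervalAdditive a b μ) {c : ℝ} (hac : a ≤ c) (hcb : c ≤ b) :
    μ c c = 0 := by
  linarith [hμ c c c hac le_rfl le_rfl hcb]

lemma sub_eq (hμ : IntervalAdditive a b μ) {c d : ℝ} (hac : a ≤ c) (hcd : c ≤ d)
    (hdb : d ≤ b) : μ a d - μ a c = μ c d := by
  linarith [hμ a c d le_rfl hac hcd hdb]

lemma slope_eq (hμ : IntervalAdditive a b μ) {x y : ℝ} (hx : x ∈ Icc a b) (hy : y ∈ Icc a b)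
    (hxy : y ≠ x) :
    slope (μ a) x y = μ (min x y) (max x y) / (max x y - min x y) := by
  rw [slope_def_field]
  rcases hxy.lt_or_gt with hlt | hgt
  · rw [min_eq_right hlt.le, max_eq_left hlt.le, ← hμ.sub_eq hy.1 hlt.le hx.2,
      ← neg_sub (μ a x), ← neg_sub x, neg_div_neg_eq]
  · rw [min_eq_left hgt.le, max_eq_right hgt.le, hμ.sub_eq hx.1 hgt.le hy.2]

lemma hasDerivWithinAt_of_peanoStrictDeriv (hμ : IntervalAdditive a b μ) {g : ℝ → ℝ}
    (hg : PeanoStrictDeriv a b μ g) {x : ℝ} (hx : x ∈ Icc a b) :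
    HasDerivWithinAt (μ a) (g x) (Icc a b) x := by
  rw [hasDerivWithinAt_iff_tendsto_slope, Metric.tendsto_nhdsWithin_nhds]
  intro ε hε
  obtain ⟨δ, hδ, hδ'⟩ := hg x hx ε hε
  refine ⟨δ, hδ, fun y ⟨hy, hyx⟩ hdist => ?_⟩
  have hyx : y ≠ x := hyx
  rw [Real.dist_eq, abs_lt] at hdist
  rw [hμ.slope_eq hx hy hyx, Real.dist_eq]
  refine hδ' _ _ (le_min hx.1 hy.1) (min_lt_max.2 hyx.symm) (max_le hx.2 hy.2)
    (Icc_subset_Ioo ?_ ?_)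
  · exact lt_min (by linarith) (by linarith)
  · exact max_lt (by linarith) (by linarith)

lemma eq_of_peanoStrictDeriv {ν : ℝ → ℝ → ℝ} {g : ℝ → ℝ} (hμ : IntervalAdditive a b μ)
    (hν : IntervalAdditive a b ν) (hμg : PeanoStrictDeriv a b μ g)
    (hνg : PeanoStrictDeriv a b ν g) {c d : ℝ} (hac : a ≤ c) (hcd : c ≤ d) (hdb : d ≤ b) :
    μ c d = ν c d := by
  have hab : a ≤ b := hac.trans (hcd.trans hdb)
  have hderiv {κ : ℝ → ℝ → ℝ} (hκ : IntervalAdditive a b κ)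
      (hκg : PeanoStrictDeriv a b κ g) (x : ℝ) (hx : x ∈ Ico a b) :
      HasDerivWithinAt (κ a) (g x) (Ici x) x :=
    (hκ.hasDerivWithinAt_of_peanoStrictDeriv hκg
      (Ico_subset_Icc_self hx)).mono_of_mem_nhdsWithin (Icc_mem_nhdsGE_of_mem hx)
  have hcont {κ : ℝ → ℝ → ℝ} (hκ : IntervalAdditive a b κ)
      (hκg : PeanoStrictDeriv a b κ g) : ContinuousOn (κ a) (Icc a b) := fun x hx =>
    (hκ.hasDerivWithinAt_of_peanoStrictDeriv hκg hx).continuousWithinAt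
  have hprim := eq_of_has_deriv_right_eq (hderiv hμ hμg) (hderiv hν hνg) (hcont hμ hμg)
    (hcont hν hνg) (by rw [hμ.apply_self le_rfl hab, hν.apply_self le_rfl hab])
  rw [← hμ.sub_eq hac hcd hdb, ← hν.sub_eq hac hcd hdb, hprim c ⟨hac, hcd.trans hdb⟩,
    hprim d ⟨hac.trans hcd, hdb⟩]

end IntervalAdditive

lemma exists_Icc_subset_Ioo_of_mem_Icc {a b y r : ℝ} (hab : a < b) (hy : y ∈ Icc a b)
    (hr : 0 < r) : ∃ c d, a ≤ c ∧ c < d ∧ d ≤ b ∧ Icc c d ⊆ Ioo (y - r) (y + r) := by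
  refine ⟨max a (y - r / 2), min b (y + r / 2), le_max_left _ _, ?_, min_le_left _ _,
    Icc_subset_Ioo ?_ ?_⟩
  · exact max_lt (lt_min hab (by linarith [hy.1])) (lt_min (by linarith [hy.2]) (by linarith))
  · exact lt_max_of_lt_right (by linarith)
  · exact min_lt_of_right_lt (by linarith)

lemma PeanoStrictDeriv.continuousOn {a b : ℝ} {μ : ℝ → ℝ → ℝ} {g : ℝ → ℝ}
    (hg : PeanoStrictDeriv a b μ g) : ContinuousOn g (Icc a b) := by
  rcases lt_or_ge a b with hab | hba
  swap
  · exact (subsingleton_Icc_of_ge hba).continuousOn g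
  intro x hx
  rw [Metric.continuousWithinAt_iff]
  intro ε hε
  obtain ⟨δx, hδx, hδx'⟩ := hg x hx (ε / 2) (half_pos hε)
  refine ⟨δx / 2, half_pos hδx, fun y hy hyx => ?_⟩
  obtain ⟨δy, hδy, hδy'⟩ := hg y hy (ε / 2) (half_pos hε)
  obtain ⟨c, d, hac, hcd, hdb, hsub⟩ :=
    exists_Icc_subset_Ioo_of_mem_Icc hab hy (lt_min hδy (half_pos hδx))
  rw [Real.dist_eq, abs_lt] at hyx
  have hry := min_le_left δy (δx / 2)
  have hrx := min_le_right δy (δx / 2)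
  have hsuby : Icc c d ⊆ Ioo (y - δy) (y + δy) :=
    hsub.trans (Ioo_subset_Ioo (by linarith) (by linarith))
  have hsubx : Icc c d ⊆ Ioo (x - δx) (x + δx) :=
    hsub.trans (Ioo_subset_Ioo (by linarith) (by linarith))
  rw [Real.dist_eq]
  calc |g y - g x| ≤ |μ c d / (d - c) - g y| + |μ c d / (d - c) - g x| := by
        rw [abs_sub_comm _ (g y)]; exact abs_sub_le _ _ _
    _ < ε / 2 + ε / 2 := add_lt_add (hδy' c d hac hcd hdb hsuby) (hδx' c d hac hcd hdb hsubx)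
    _ = ε := add_halves ε

section Integral

variable {a b : ℝ} {ρ : ℝ → ℝ}

lemma intervalAdditive_integral (hρ : ContinuousOn ρ (Icc a b)) :
    IntervalAdditive a b (fun c d => ∫ t in c..d, ρ t) := by
  intro c d e hac hcd hde heb
  exact (intervalIntegral.integral_add_adjacent_intervals
    ((hρ.mono (Icc_subset_Icc hac (hde.trans heb))).intervalIntegrable_of_Icc hcd)
    ((hρ.mono (Icc_subset_Icc (hac.trans hcd) heb)).intervalIntegrable_of_Icc hde)).symm

lemma peanoStrictDeriv_integral (hρ : ContinuousOn ρ (Icc a b)) :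
    PeanoStrictDeriv a b (fun c d => ∫ t in c..d, ρ t) ρ := by
  intro x hx ε hε
  obtain ⟨δ, hδ, hδ'⟩ := Metric.continuousWithinAt_iff.1 (hρ x hx) (ε / 2) (half_pos hε)
  refine ⟨δ, hδ, fun c d hac hcd hdb hsub => ?_⟩
  have hlen : 0 < d - c := sub_pos.2 hcd
  have hclose : ∀ t ∈ uIoc c d, ‖ρ t - ρ x‖ ≤ ε / 2 := by
    intro t ht
    rw [uIoc_of_le hcd.le] at ht
    have htx := hsub (Ioc_subset_Icc_self ht)
    refine (hδ' ⟨hac.trans ht.1.le, ht.2.trans hdb⟩ ?_).le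
    rw [Real.dist_eq, abs_lt]
    constructor <;> linarith [htx.1, htx.2]
  have hmean : (∫ t in c..d, ρ t) / (d - c) - ρ x = (∫ t in c..d, ρ t - ρ x) / (d - c) := by
    rw [intervalIntegral.integral_sub
      ((hρ.mono (Icc_subset_Icc hac hdb)).intervalIntegrable_of_Icc hcd.le)
      intervalIntegrable_const, intervalIntegral.integral_const, smul_eq_mul]
    field_simp
  have hbound := intervalIntegral.norm_integral_le_of_norm_le_const hclose
  rw [Real.norm_eq_abs, abs_of_pos hlen] at hbound
  dsimp only
  rw [hmean, abs_div, abs_of_pos hlen, div_lt_iff₀ hlen]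
  exact hbound.trans_lt (mul_lt_mul_of_pos_right (half_lt_self hε) hlen)

end Integral

theorem peano_mass_density_general (a b : ℝ) (μ : ℝ → ℝ → ℝ)
    (hμ : IntervalAdditive a b μ) (ρ : ℝ → ℝ) :
    PeanoStrictDeriv a b μ ρ ↔
      (ContinuousOn ρ (Set.Icc a b) ∧
        ∀ c d : ℝ, a ≤ c → c ≤ d → d ≤ b → μ c d = ∫ t in c..d, ρ t) := by
  constructor
  · intro hμρ
    have hρ := hμρ.continuousOn
    exact ⟨hρ, fun c d hac hcd hdb => hμ.eq_of_peanoStrictDeriv (intervalAdditive_integral hρ)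
      hμρ (peanoStrictDeriv_integral hρ) hac hcd hdb⟩
  · rintro ⟨hρ, hμ_eq⟩ x hx ε hε
    obtain ⟨δ, hδ, hδ'⟩ := peanoStrictDeriv_integral hρ x hx ε hε
    refine ⟨δ, hδ, fun c d hac hcd hdb hsub => ?_⟩
    rw [hμ_eq c d hac hcd.le hdb]
    exact hδ' c d hac hcd hdb hsub

/-- Peano's fundamental theorem (1887): `ρ` is the strict derivative of the
interval-additive set function `μ` with respect to length on `[a,b]` iff `ρ` is
continuous on `[a,b]` and `μ` is the integral of `ρ`. -/
theorem peano_mass_density (a b : ℝ) (hab : a ≤ b) (μ : ℝ → ℝ → ℝ)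
    (hμ : IntervalAdditive a b μ) (ρ : ℝ → ℝ) :
    PeanoStrictDeriv a b μ ρ ↔
      (ContinuousOn ρ (Set.Icc a b) ∧
        ∀ c d : ℝ, a ≤ c → c ≤ d → d ≤ b → μ c d = ∫ t in c..d, ρ t) :=
  peano_mass_density_general a b μ hμ ρ
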